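/- Let C and C̃ be two N×M cost matrices with |c_{ij} − c̃_{ij}| ≤ δ for all i, j, and let A* and Ã* be optimal feasible assignments for C and C̃ respectively (feasible meaning binary with row/column sums ≤ 1 and total sum min(N,M)). Then the true cost of the suboptimal assignment satisfies ∑ c_{ij} ã*_{ij} ≤ ∑ c_{ij} a*_{ij} + 2·min(N,M)·δ. -/

import Mathlib

def FeasibleAssignment {N M : ℕ} (A : Fin N → Fin M → ℝ) : Prop :=
  (∀ i j, A i j = 0 ∨ A i j = 1) ∧
  (∀ i, ∑ j, A i j ≤ 1) ∧
  (∀ j, ∑ i, A i j ≤ 1) ∧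
  (∑ i, ∑ j, A i j = min N M)

/-! Every feasible assignment has total weight `min N M`, so its costs under `C` and `C̃`
differ by at most `min N M * δ`. Passing from `C` to `C̃` on `Ã*`, using the optimality of `Ã*`
for `C̃` against `A*`, and passing back to `C` on `A*` costs this error twice. -/

open Finset

theorem abs_sum_mul_sub_sum_mul_le {ι : Type*} (s : Finset ι) (c c' w : ι → ℝ) {δ : ℝ}
    (hδ : ∀ i ∈ s, |c i - c' i| ≤ δ) (hw : ∀ i ∈ s, 0 ≤ w i) :
    |∑ i ∈ s, c i * w i - ∑ i ∈ s, c' i * w i| ≤ δ * ∑ i ∈ s, w i := by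
  rw [← sum_sub_distrib, mul_sum]
  refine (abs_sum_le_sum_abs _ _).trans (sum_le_sum fun i hi => ?_)
  rw [← sub_mul, abs_mul, abs_of_nonneg (hw i hi)]
  exact mul_le_mul_of_nonneg_right (hδ i hi) (hw i hi)

theorem abs_sum_sum_mul_sub_sum_sum_mul_le {ι κ : Type*} [Fintype ι] [Fintype κ]
    (C C' A : ι → κ → ℝ) {δ : ℝ} (hδ : ∀ i j, |C i j - C' i j| ≤ δ) (hA : ∀ i j, 0 ≤ A i j) :
    |∑ i, ∑ j, C i j * A i j - ∑ i, ∑ j, C' i j * A i j| ≤ δ * ∑ i, ∑ j, A i j := by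
  simp only [← Fintype.sum_prod_type']
  exact abs_sum_mul_sub_sum_mul_le _ _ _ _ (fun p _ => hδ p.1 p.2) (fun p _ => hA p.1 p.2)

theorem FeasibleAssignment.nonneg {N M : ℕ} {A : Fin N → Fin M → ℝ}
    (hA : FeasibleAssignment A) (i : Fin N) (j : Fin M) : 0 ≤ A i j := by
  rcases hA.1 i j with h | h <;> simp [h]

theorem FeasibleAssignment.abs_cost_sub_le {N M : ℕ} {A : Fin N → Fin M → ℝ}
    (hA : FeasibleAssignment A) (C C' : Fin N → Fin M → ℝ) {δ : ℝ}
    (hδ : ∀ i j, |C i j - C' i j| ≤ δ) :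
    |∑ i, ∑ j, C i j * A i j - ∑ i, ∑ j, C' i j * A i j| ≤ min N M * δ := by
  rw [mul_comm, ← hA.2.2.2]
  exact abs_sum_sum_mul_sub_sum_sum_mul_le C C' A hδ hA.nonneg

theorem assignment_stability_general (N M : ℕ) (C Ct : Fin N → Fin M → ℝ) (δ : ℝ)
    (hδ : ∀ i j, |C i j - Ct i j| ≤ δ)
    (Astar Atstar : Fin N → Fin M → ℝ)
    (hA : FeasibleAssignment Astar) (hAt : FeasibleAssignment Atstar)
    (hAtopt : ∀ A, FeasibleAssignment A →
      ∑ i, ∑ j, Ct i j * Atstar i j ≤ ∑ i, ∑ j, Ct i j * A i j) :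
    ∑ i, ∑ j, C i j * Atstar i j ≤
      (∑ i, ∑ j, C i j * Astar i j) + 2 * min N M * δ := by
  have hAt_err := abs_le.mp (hAt.abs_cost_sub_le C Ct hδ)
  have hA_err := abs_le.mp (hA.abs_cost_sub_le C Ct hδ)
  have hAt_le_A := hAtopt Astar hA
  linarith [hAt_err.2, hA_err.1]

/-- Stability of the assignment problem under entrywise cost perturbation:
    the true cost of the assignment optimal for the perturbed costs exceeds the
    optimal true cost by at most 2·min(N,M)·δ. -/
theorem assignment_stability (N M : ℕ) (C Ct : Fin N → Fin M → ℝ) (δ : ℝ)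
    (hδ : ∀ i j, |C i j - Ct i j| ≤ δ)
    (Astar Atstar : Fin N → Fin M → ℝ)
    (hA : FeasibleAssignment Astar) (hAt : FeasibleAssignment Atstar)
    (hAopt : ∀ A, FeasibleAssignment A →
      ∑ i, ∑ j, C i j * Astar i j ≤ ∑ i, ∑ j, C i j * A i j)
    (hAtopt : ∀ A, FeasibleAssignment A →
      ∑ i, ∑ j, Ct i j * Atstar i j ≤ ∑ i, ∑ j, Ct i j * A i j) :
    ∑ i, ∑ j, C i j * Atstar i j ≤
      (∑ i, ∑ j, C i j * Astar i j) + 2 * min N M * δ :=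
  assignment_stability_general N M C Ct δ hδ Astar Atstar hA hAt hAtopt
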